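/- arXiv:2602.00503 — 2 statements merged into one kernel-verified Lean document; each statement's English description precedes it below -/
import Mathlib

section
/- Let g ≥ 1, let 1 = t₀ < t₁ < t₂ < ... < t_{g+1} be reals with t_l > 1 for l ≥ 1, and let 1 = m₁ < m₂ < ... < m_{g+1} be positive integers such that m_l divides m_{l+1} properly (so m_l - m_{l+1} ≤ -1). Define for j with 2 ≤ j ≤ g+1 and s ∈ (t_{j-1}, t_j] the function F_j(s) = (2 + Σ_{l=1}^{j-1} m_l (t_l - t_{l-1}) + m_j (s - t_{j-1})) / s. Then F_j(s) = m_j + (1 + Σ_{l=1}^{j-1} t_l (m_l - m_{l+1})) / s, the quantity 1 + Σ_{l=1}^{j-1} t_l (m_l - m_{l+1}) is negative, and F_j is strictly increasing on (t_{j-1}, t_j]. -/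
lemma sumid_aux (t : ℕ → ℝ) (m : ℕ → ℕ) (ht0 : t 0 = 1) (hm1 : m 1 = 1)
    (j : ℕ) (hj : 2 ≤ j) :
    ∑ l ∈ Finset.Ico 1 j, (m l : ℝ) * (t l - t (l - 1))
      = ∑ l ∈ Finset.Ico 1 j, t l * ((m l : ℝ) - (m (l + 1) : ℝ))
        + (m j : ℝ) * t (j - 1) - 1 := by
  induction j, hj using Nat.le_induction with
  | base =>
      simp [Finset.sum_Ico_eq_sum_range, ht0, hm1]
      ring
  | succ j hj ih =>
      rw [Finset.sum_Ico_succ_top (by omega : 1 ≤ j),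
        Finset.sum_Ico_succ_top (by omega : 1 ≤ j), ih]
      have : j + 1 - 1 = j := rfl
      rw [this]
      ring

/-- Computational core of Lemma 4.2: for `s ∈ (t_{j-1}, t_j]`,
`F_j(s) = (2 + Σ_{l=1}^{j-1} m_l (t_l - t_{l-1}) + m_j (s - t_{j-1}))/s`
rewrites as `m_j + (1 + Σ_{l=1}^{j-1} t_l (m_l - m_{l+1}))/s`; the constant
`1 + Σ_{l=1}^{j-1} t_l (m_l - m_{l+1})` is negative; and `F_j` is strictly increasing
on `(t_{j-1}, t_j]`. -/
theorem stmt_6 (g : ℕ) (hg : 1 ≤ g) (t : ℕ → ℝ) (m : ℕ → ℕ)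
    (ht0 : t 0 = 1) (htmono : StrictMonoOn t (Set.Icc 0 (g + 1)))
    (ht1 : ∀ l, 1 ≤ l → l ≤ g + 1 → 1 < t l)
    (hm1 : m 1 = 1)
    (hmdvd : ∀ l, 1 ≤ l → l ≤ g → m l ∣ m (l + 1) ∧ m l < m (l + 1))
    (j : ℕ) (hj : 2 ≤ j) (hjg : j ≤ g + 1) :
    (∀ s ∈ Set.Ioc (t (j - 1)) (t j),
      (2 + ∑ l ∈ Finset.Ico 1 j, (m l : ℝ) * (t l - t (l - 1)) + (m j : ℝ) * (s - t (j - 1))) / s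
        = (m j : ℝ) + (1 + ∑ l ∈ Finset.Ico 1 j, t l * ((m l : ℝ) - (m (l + 1) : ℝ))) / s) ∧
    (1 + ∑ l ∈ Finset.Ico 1 j, t l * ((m l : ℝ) - (m (l + 1) : ℝ)) < 0) ∧
    StrictMonoOn
      (fun s => (2 + ∑ l ∈ Finset.Ico 1 j, (m l : ℝ) * (t l - t (l - 1))
        + (m j : ℝ) * (s - t (j - 1))) / s)
      (Set.Ioc (t (j - 1)) (t j)) := by
  have htj1 : 1 < t (j - 1) := ht1 (j - 1) (by omega) (by omega)
  have hsum := sumid_aux t m ht0 hm1 j hj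
  set C : ℝ := 1 + ∑ l ∈ Finset.Ico 1 j, t l * ((m l : ℝ) - (m (l + 1) : ℝ)) with hC
  -- part 1
  have h1 : ∀ s ∈ Set.Ioc (t (j - 1)) (t j),
      (2 + ∑ l ∈ Finset.Ico 1 j, (m l : ℝ) * (t l - t (l - 1)) + (m j : ℝ) * (s - t (j - 1))) / s
        = (m j : ℝ) + C / s := by
    intro s hs
    have hs0 : s ≠ 0 := by
      have := hs.1; intro h; rw [h] at this; linarith
    field_simp
    rw [hsum, hC]
    ring
  -- part 2
  have h2 : C < 0 := by
    have hlt : ∑ l ∈ Finset.Ico 1 j, t l * ((m l : ℝ) - (m (l + 1) : ℝ))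
        < ∑ l ∈ Finset.Ico 1 j, (-1 : ℝ) := by
      apply Finset.sum_lt_sum_of_nonempty
      · exact Finset.nonempty_Ico.mpr (by omega)
      · intro l hl
        simp only [Finset.mem_Ico] at hl
        have hdvd := hmdvd l hl.1 (by omega)
        have hml : (m l : ℝ) + 1 ≤ (m (l + 1) : ℝ) := by
          exact_mod_cast Nat.succ_le_of_lt hdvd.2
        have htl : 1 < t l := ht1 l hl.1 (by omega)
        nlinarith
    have : ∑ l ∈ Finset.Ico 1 j, (-1 : ℝ) = -(j - 1 : ℕ) := by
      simp
    rw [this] at hlt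
    have : (1 : ℝ) ≤ (j - 1 : ℕ) := by exact_mod_cast (by omega : 1 ≤ j - 1)
    rw [hC]; linarith
  refine ⟨h1, h2, ?_⟩
  intro s₁ hs₁ s₂ hs₂ hlt
  simp only
  rw [h1 s₁ hs₁, h1 s₂ hs₂]
  have hp1 : 0 < s₁ := lt_trans (by linarith) hs₁.1
  have hp2 : 0 < s₂ := lt_trans (by linarith) hs₂.1
  have : C / s₁ < C / s₂ := by
    rw [div_lt_div_iff₀ hp1 hp2]
    nlinarith
  linarith
end

section
/- Let g ≥ 0, let 1 = t₀ < t₁ < ... < t_{g+1} be reals and 1 = m₁ < m₂ < ... < m_{g+1} positive integers with each m_j dividing m_{j+1} properly. Define F on [1, t_{g+1}] piecewise by F(s) = (2 + Σ_{l=1}^{j-1} m_l (t_l - t_{l-1}) + m_j (s - t_{j-1}))/s for s ∈ (t_{j-1}, t_j] (and F(1) = 2). Then F attains its minimum over [1, t_{g+1}] exactly at s = t₁, with minimum value 1 + 1/t₁. -/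
/-- Lemma 4.2: the piecewise function `F` (equal on each piece `(t_{j-1}, t_j]` to
`(2 + Σ_{l=1}^{j-1} m_l (t_l - t_{l-1}) + m_j (s - t_{j-1}))/s`, with `F(1) = 2`)
attains its minimum over `[1, t_{g+1}]` exactly at `s = t₁`, with value `1 + 1/t₁`. -/
theorem stmt_8 (g : ℕ) (t : ℕ → ℝ) (m : ℕ → ℕ)
    (ht0 : t 0 = 1) (htmono : StrictMonoOn t (Set.Icc 0 (g + 1)))
    (hm1 : m 1 = 1)
    (hmdvd : ∀ l, 1 ≤ l → l ≤ g → m l ∣ m (l + 1) ∧ m l < m (l + 1))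
    (F : ℝ → ℝ)
    (hF : ∀ j, 1 ≤ j → j ≤ g + 1 → ∀ s ∈ Set.Ioc (t (j - 1)) (t j),
      F s = (2 + ∑ l ∈ Finset.Ico 1 j, (m l : ℝ) * (t l - t (l - 1))
        + (m j : ℝ) * (s - t (j - 1))) / s)
    (hF1 : F 1 = 2) :
    (∀ s ∈ Set.Icc 1 (t (g + 1)), F (t 1) ≤ F s) ∧
    F (t 1) = 1 + 1 / t 1 ∧
    (∀ s ∈ Set.Icc 1 (t (g + 1)), F s = F (t 1) → s = t 1) := by
  -- basic facts about t
  have ht_lt : ∀ i j : ℕ, j ≤ g + 1 → i < j → t i < t j := by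
    intro i j hj hij
    exact htmono ⟨Nat.zero_le _, le_trans (le_of_lt hij) hj⟩ ⟨Nat.zero_le _, hj⟩ hij
  have ht1 : ∀ j : ℕ, j ≤ g + 1 → 1 ≤ t j := by
    intro j hj
    rcases Nat.eq_zero_or_pos j with h | h
    · simp [h, ht0]
    · rw [← ht0]; exact le_of_lt (ht_lt 0 j hj h)
  have htpos : ∀ j : ℕ, j ≤ g + 1 → 0 < t j := fun j hj => lt_of_lt_of_le one_pos (ht1 j hj)
  -- m is monotone, m j ≥ 1 for j ≥ 1
  have hm_mono : ∀ j : ℕ, 1 ≤ j → j ≤ g → (m j : ℝ) ≤ m (j + 1) := by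
    intro j h1 h2
    exact_mod_cast le_of_lt (hmdvd j h1 h2).2
  have hm1le : ∀ j : ℕ, 1 ≤ j → j ≤ g + 1 → 1 ≤ m j := by
    intro j h1 h2
    induction j with
    | zero => omega
    | succ k ih =>
      rcases Nat.eq_zero_or_pos k with hk | hk
      · simp [hk, hm1]
      · have := (hmdvd k hk (by omega)).2
        have := ih hk (by omega)
        omega
  -- the cumulative constants
  set C : ℕ → ℝ := fun j => 2 + ∑ l ∈ Finset.Ico 1 j, (m l : ℝ) * (t l - t (l - 1)) with hC
  have hCsucc : ∀ j : ℕ, 1 ≤ j → C (j + 1) = C j + (m j : ℝ) * (t j - t (j - 1)) := by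
    intro j hj
    simp only [hC]
    rw [Finset.sum_Ico_succ_top hj]
    ring
  have hC1 : C 1 = 2 := by simp [hC]
  have hC2 : C 2 = 1 + t 1 := by
    rw [hCsucc 1 le_rfl, hC1, hm1, ht0]; push_cast; ring
  -- the key positive quantity
  have hA : ∀ j : ℕ, 1 ≤ j → j ≤ g → 0 < (m (j + 1) : ℝ) * t j - C (j + 1) := by
    intro j h1 h2
    induction j with
    | zero => omega
    | succ k ih =>
      rcases Nat.eq_zero_or_pos k with hk | hk
      · subst hk
        have hm2 : (2 : ℝ) ≤ m 2 := by
          have h12 := (hmdvd 1 le_rfl h2).2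
          rw [hm1] at h12
          norm_num at h12
          exact_mod_cast h12
        have ht1' : 1 < t 1 := by rw [← ht0]; exact ht_lt 0 1 (by omega) one_pos
        rw [hC2]
        nlinarith
      · have hih := ih hk (by omega)
        rw [hCsucc (k + 1) (by omega)]
        have hmm : (m (k + 1) : ℝ) ≤ m (k + 2) := hm_mono (k + 1) (by omega) h2
        have htk : 0 < t (k + 1) := htpos (k + 1) (by omega)
        simp only [Nat.add_sub_cancel]
        nlinarith
  -- restatement of hF via C
  have hFC : ∀ j, 1 ≤ j → j ≤ g + 1 → ∀ s ∈ Set.Ioc (t (j - 1)) (t j),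
      F s = (C j + (m j : ℝ) * (s - t (j - 1))) / s := hF
  -- value at right endpoints
  have hFend : ∀ j, 1 ≤ j → j ≤ g + 1 → F (t j) = C (j + 1) / t j := by
    intro j h1 h2
    have hmem : t j ∈ Set.Ioc (t (j - 1)) (t j) :=
      ⟨ht_lt (j - 1) j h2 (by omega), le_rfl⟩
    rw [hFC j h1 h2 (t j) hmem, hCsucc j h1]
  have hFt1 : F (t 1) = C 2 / t 1 := hFend 1 le_rfl (by omega)
  have ht1pos : 0 < t 1 := htpos 1 (by omega)
  have ht1gt : 1 < t 1 := by rw [← ht0]; exact ht_lt 0 1 (by omega) one_pos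
  have hval : F (t 1) = 1 + 1 / t 1 := by
    rw [hFt1, hC2]; field_simp; ring
  -- strict increase on pieces j ≥ 2
  have hstep : ∀ j, 2 ≤ j → j ≤ g + 1 → ∀ s ∈ Set.Ioc (t (j - 1)) (t j),
      C j / t (j - 1) < F s := by
    intro j h2 hg s hs
    have h1 : 1 ≤ j := by omega
    rw [hFC j h1 hg s hs]
    have hAj : 0 < (m j : ℝ) * t (j - 1) - C j := by
      have := hA (j - 1) (by omega) (by omega)
      have hj' : j - 1 + 1 = j := by omega
      rwa [hj'] at this
    have htj1 : 0 < t (j - 1) := htpos (j - 1) (by omega)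
    have hspos : 0 < s := lt_trans htj1 hs.1
    rw [div_lt_div_iff₀ htj1 hspos]
    have hlt : t (j - 1) < s := hs.1
    nlinarith
  -- the values C (j+1) / t j are ≥ C 2 / t 1 for all 1 ≤ j ≤ g + 1
  have hB : ∀ j, 1 ≤ j → j ≤ g + 1 → C 2 / t 1 ≤ C (j + 1) / t j := by
    intro j h1 h2
    induction j with
    | zero => omega
    | succ k ih =>
      rcases Nat.eq_zero_or_pos k with hk | hk
      · subst hk; exact le_rfl
      · have hprev := ih hk (by omega)
        have hmem : t (k + 1) ∈ Set.Ioc (t (k + 1 - 1)) (t (k + 1)) :=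
          ⟨by simpa using ht_lt k (k + 1) h2 (Nat.lt_succ_self k), le_rfl⟩
        have := hstep (k + 1) (by omega) h2 (t (k + 1)) hmem
        rw [hFend (k + 1) (by omega) h2] at this
        simp only [Nat.add_sub_cancel] at this
        linarith
  -- main per-piece claim
  have hmain : ∀ j, 1 ≤ j → j ≤ g + 1 → ∀ s ∈ Set.Ioc (t (j - 1)) (t j),
      F (t 1) ≤ F s ∧ (F s = F (t 1) → s = t 1) := by
    intro j h1 h2 s hs
    rcases Nat.lt_or_ge j 2 with hj | hj
    · -- j = 1
      have hj1 : j = 1 := by omega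
      subst hj1
      have hs' := hs
      simp only [Nat.sub_self, ht0] at hs'
      have hspos : 0 < s := lt_trans one_pos hs'.1
      have hFs : F s = (1 + s) / s := by
        rw [hFC 1 le_rfl h2 s hs, hC1, hm1]
        simp only [Nat.sub_self, ht0]
        push_cast; ring_nf
      rw [hFs, hFt1, hC2]
      constructor
      · rw [div_le_div_iff₀ ht1pos hspos]
        nlinarith [hs'.2]
      · intro heq
        rw [div_eq_div_iff (ne_of_gt hspos) (ne_of_gt ht1pos)] at heq
        nlinarith
    · -- j ≥ 2
      have hlt : C 2 / t 1 < F s := by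
        have h := hstep j hj h2 s hs
        have hb := hB (j - 1) (by omega) (by omega)
        have hj' : j - 1 + 1 = j := by omega
        rw [hj'] at hb
        linarith
      constructor
      · rw [hFt1]; exact le_of_lt hlt
      · intro heq
        exfalso
        rw [hFt1] at heq
        exact absurd heq (ne_of_gt hlt)
  -- locate any s in some piece
  have hloc : ∀ s, 1 < s → s ≤ t (g + 1) →
      ∃ j, 1 ≤ j ∧ j ≤ g + 1 ∧ s ∈ Set.Ioc (t (j - 1)) (t j) := by
    intro s hs1 hs2
    have hex : ∃ j, j ≤ g + 1 ∧ s ≤ t j := ⟨g + 1, le_rfl, hs2⟩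
    classical
    obtain ⟨j, hjle, hjs, hjmin⟩ :
        ∃ j, j ≤ g + 1 ∧ s ≤ t j ∧ ∀ i < j, ¬(i ≤ g + 1 ∧ s ≤ t i) :=
      ⟨Nat.find hex, (Nat.find_spec hex).1, (Nat.find_spec hex).2,
        fun i hi => Nat.find_min hex hi⟩
    have hj1 : 1 ≤ j := by
      by_contra h
      have hj0 : j = 0 := by omega
      rw [hj0, ht0] at hjs
      linarith
    have hmin := hjmin (j - 1) (by omega)
    push_neg at hmin
    have : t (j - 1) < s := hmin (by omega)
    exact ⟨j, hj1, hjle, this, hjs⟩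
  refine ⟨?_, hval, ?_⟩
  · intro s hs
    rcases eq_or_lt_of_le hs.1 with h1 | h1
    · rw [← h1, hF1, hval]
      have : 1 / t 1 < 1 := by rw [div_lt_one ht1pos]; exact ht1gt
      linarith
    · obtain ⟨j, hj1, hj2, hjs⟩ := hloc s h1 hs.2
      exact (hmain j hj1 hj2 s hjs).1
  · intro s hs heq
    rcases eq_or_lt_of_le hs.1 with h1 | h1
    · exfalso
      rw [← h1, hF1] at heq
      rw [hval] at heq
      have : 1 / t 1 < 1 := by rw [div_lt_one ht1pos]; exact ht1gt
      linarith
    · obtain ⟨j, hj1, hj2, hjs⟩ := hloc s h1 hs.2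
      exact (hmain j hj1 hj2 s hjs).2 heq
end
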